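/- Let n and λ be even positive integers, and set m = 1 + λ/2. Define constants ρ and Δ_0 as follows: (a) if n − λ > 3, let s = ⌈(n−λ−3)/2⌉, ρ = 1 + s/(2m+3), and Δ_0 = (2m+3)(2m+4)⋯(2m+2+s)/ρ^{2m+2}; (b) if n − λ ≤ 1, let s = −⌈(n−λ−3)/2⌉, ρ = 1, and Δ_0 = 1/((2m−s+3)(2m−s+4)⋯(2m+2)); (c) if 1 < n − λ ≤ 3, let ρ = 1 and Δ_0 = 1. Then for every integer k ≥ 2m + 2, ∫_0^∞ r^{k + (n−λ−3)/2} e^{−r} dr ≤ Δ_0 · ρ^k · k!, i.e. Γ(k + (n−λ−1)/2) ≤ Δ_0 · ρ^k · k!, where Γ is the Gamma function. -/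
import Mathlib

private lemma gammaMonoAux {x y : ℝ} (hx : 2 ≤ x) (hxy : x ≤ y) :
    Real.Gamma x ≤ Real.Gamma y :=
  Real.Gamma_strictMonoOn_Ici.monotoneOn (Set.mem_Ici.mpr hx)
    (Set.mem_Ici.mpr (le_trans hx hxy)) hxy

private lemma gammaHalfAux (a : ℕ) (ha : 2 ≤ a) :
    Real.Gamma ((a : ℝ) + 1/2) ≤ (a.factorial : ℝ) := by
  have h1 : Real.Gamma ((a : ℝ) + 1/2) ≤ Real.Gamma ((a : ℝ) + 1) := by
    apply gammaMonoAux _ (by linarith)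
    have : (2:ℝ) ≤ a := by exact_mod_cast ha
    linarith
  calc Real.Gamma ((a : ℝ) + 1/2) ≤ Real.Gamma ((a : ℝ) + 1) := h1
    _ = (a.factorial : ℝ) := Real.Gamma_nat_eq_factorial a

private lemma auxA (M t : ℕ) : ∀ k, M ≤ k →
    (((k + t).factorial : ℝ)) * (M.factorial : ℝ) ≤
      ((M + t).factorial : ℝ) * (1 + (t : ℝ) / (M + 1)) ^ (k - M) * (k.factorial : ℝ) := by
  intro k hk
  induction k, hk using Nat.le_induction with
  | base => simp [mul_comm]
  | succ k hk ih =>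
    have hρ0 : (0:ℝ) < 1 + (t : ℝ) / (M + 1) := by positivity
    have hMk : (M : ℝ) + 1 ≤ (k : ℝ) + 1 := by
      have : (M : ℝ) ≤ k := by exact_mod_cast hk
      linarith
    have key : ((k : ℝ) + 1 + t) ≤ (1 + (t : ℝ) / (M + 1)) * ((k : ℝ) + 1) := by
      have hM1 : (0:ℝ) < (M : ℝ) + 1 := by positivity
      have h1 : (t : ℝ) ≤ (t : ℝ) * ((k : ℝ) + 1) / ((M : ℝ) + 1) := by
        rw [le_div_iff₀ hM1]
        nlinarith [(Nat.cast_nonneg t : (0:ℝ) ≤ t)]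
      have : (1 + (t : ℝ) / (M + 1)) * ((k : ℝ) + 1)
          = ((k : ℝ) + 1) + (t : ℝ) * ((k : ℝ) + 1) / ((M : ℝ) + 1) := by ring
      linarith [this ▸ le_refl ((1 + (t : ℝ) / (M + 1)) * ((k : ℝ) + 1))]
    have hfac1 : ((k + 1 + t).factorial : ℝ) = ((k + t).factorial : ℝ) * ((k : ℝ) + 1 + t) := by
      have h : k + 1 + t = (k + t) + 1 := by omega
      rw [h, Nat.factorial_succ]
      push_cast
      ring
    have hpow : (1 + (t : ℝ) / (M + 1)) ^ (k + 1 - M)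
        = (1 + (t : ℝ) / (M + 1)) ^ (k - M) * (1 + (t : ℝ) / (M + 1)) := by
      rw [show k + 1 - M = (k - M) + 1 by omega, pow_succ]
    have hfac2 : ((k + 1).factorial : ℝ) = ((k : ℝ) + 1) * (k.factorial : ℝ) := by
      rw [Nat.factorial_succ]; push_cast; ring
    rw [hfac1, hpow, hfac2]
    have hmul := mul_le_mul ih key (by positivity) (by positivity)
    calc ((k + t).factorial : ℝ) * ((k : ℝ) + 1 + t) * (M.factorial : ℝ)
        = (((k + t).factorial : ℝ) * (M.factorial : ℝ)) * ((k : ℝ) + 1 + t) := by ring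
      _ ≤ (((M + t).factorial : ℝ) * (1 + (t : ℝ) / (M + 1)) ^ (k - M) * (k.factorial : ℝ))
            * ((1 + (t : ℝ) / (M + 1)) * ((k : ℝ) + 1)) := hmul
      _ = ((M + t).factorial : ℝ) * ((1 + (t : ℝ) / (M + 1)) ^ (k - M) * (1 + (t : ℝ) / (M + 1)))
            * (((k : ℝ) + 1) * (k.factorial : ℝ)) := by ring

private lemma auxB {M t k : ℕ} (htM : t ≤ M) (hMk : M ≤ k) :
    (k - t).factorial * M.factorial ≤ (M - t).factorial * k.factorial := by
  have h1 := Nat.factorial_mul_descFactorial (le_trans htM hMk)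
  have h2 := Nat.factorial_mul_descFactorial htM
  calc (k - t).factorial * M.factorial
      = (k - t).factorial * ((M - t).factorial * M.descFactorial t) := by rw [h2]
    _ ≤ (k - t).factorial * ((M - t).factorial * k.descFactorial t) := by
        gcongr
    _ = (M - t).factorial * ((k - t).factorial * k.descFactorial t) := by ring
    _ = (M - t).factorial * k.factorial := by rw [h1]

/-- Let `n` and `λ` be even positive integers, `m = 1 + λ/2`, and let
`s = ⌈(n−λ−3)/2⌉`.  Define `ρ` and `Δ₀` according to the three cases
(a) `n − λ > 3`, (b) `n − λ ≤ 1`, (c) `1 < n − λ ≤ 3` as in the remark.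
Then for every integer `k ≥ 2m+2`,
`Γ(k + (n−λ−1)/2) ≤ Δ₀ · ρ^k · k!`. -/
theorem gamma_le_of_shifted_surface_spline (n lam : ℕ) (hn : Even n) (hlam : Even lam)
    (hnpos : 0 < n) (hlampos : 0 < lam)
    (m : ℕ) (hm : m = 1 + lam / 2)
    (s : ℤ) (hs : s = ⌈((n : ℝ) - (lam : ℝ) - 3) / 2⌉)
    (ρ Δ₀ : ℝ)
    (hcase_a : 3 < (n : ℤ) - (lam : ℤ) →
      ρ = 1 + (s : ℝ) / (2 * m + 3) ∧
      Δ₀ = (((2 * m + 2 + s.toNat).factorial : ℝ) / ((2 * m + 2).factorial : ℝ)) /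
        ρ ^ (2 * m + 2))
    (hcase_b : (n : ℤ) - (lam : ℤ) ≤ 1 →
      ρ = 1 ∧
      Δ₀ = ((2 * m + 2 - (-s).toNat).factorial : ℝ) / ((2 * m + 2).factorial : ℝ))
    (hcase_c : 1 < (n : ℤ) - (lam : ℤ) ∧ (n : ℤ) - (lam : ℤ) ≤ 3 →
      ρ = 1 ∧ Δ₀ = 1) :
    ∀ k : ℕ, 2 * m + 2 ≤ k →
      Real.Gamma ((k : ℝ) + ((n : ℝ) - (lam : ℝ) - 1) / 2) ≤
        Δ₀ * ρ ^ k * (k.factorial : ℝ) := by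
  obtain ⟨n2, hn2⟩ := hn
  obtain ⟨l2, hl2⟩ := hlam
  have hnR : (n : ℝ) = 2 * n2 := by rw [hn2]; push_cast; ring
  have hlR : (lam : ℝ) = 2 * l2 := by rw [hl2]; push_cast; ring
  have hnZ : (n : ℤ) = 2 * n2 := by rw [hn2]; push_cast; ring
  have hlZ : (lam : ℤ) = 2 * l2 := by rw [hl2]; push_cast; ring
  have hn2pos : 1 ≤ n2 := by omega
  have hl2pos : 1 ≤ l2 := by omega
  have hmval : m = 1 + l2 := by omega
  have hs' : s = (n2 : ℤ) - l2 - 1 := by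
    have heq : ((n : ℝ) - lam - 3) / 2 = (1/2 : ℝ) + (((n2 : ℤ) - l2 - 2 : ℤ) : ℝ) := by
      rw [hnR, hlR]; push_cast; ring
    rw [hs, heq, Int.ceil_add_intCast]
    have : ⌈(1/2 : ℝ)⌉ = 1 := by rw [Int.ceil_eq_iff] <;> norm_num
    rw [this]; ring
  intro k hk
  set M := 2 * m + 2 with hM
  have hMk : M ≤ k := hk
  have hM6 : 6 ≤ M := by omega
  have hsR : (s : ℝ) = (n2 : ℝ) - l2 - 1 := by rw [hs']; push_cast; ring
  have harg : ((n : ℝ) - lam - 1) / 2 = (s : ℝ) + 1/2 := by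
    rw [hnR, hlR, hsR]; ring
  rcases lt_or_ge 3 ((n : ℤ) - lam) with h3 | h31
  · -- case a
    obtain ⟨hρ, hΔ⟩ := hcase_a h3
    have hspos : 1 ≤ s := by omega
    set t := s.toNat with htdef
    have htZ : (t : ℤ) = s := Int.toNat_of_nonneg (by omega)
    have htR : (t : ℝ) = (s : ℝ) := by exact_mod_cast congrArg Int.cast htZ
    have ht1 : 1 ≤ t := by omega
    have hρval : ρ = 1 + (t : ℝ) / (M + 1) := by
      rw [hρ, htR, hM]; push_cast; ring_nf
    have hρ1 : (1:ℝ) ≤ ρ := by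
      have h0 : (0:ℝ) ≤ (t : ℝ) / (M + 1) := by positivity
      rw [hρval]; linarith
    have hρ0 : (0:ℝ) < ρ := lt_of_lt_of_le one_pos hρ1
    have hargk : (k : ℝ) + ((n : ℝ) - lam - 1) / 2 = ((k + t : ℕ) : ℝ) + 1/2 := by
      rw [harg, ← htR]; push_cast; ring
    rw [hargk]
    have hgam := gammaHalfAux (k + t) (by omega)
    refine le_trans hgam ?_
    have haux := auxA M t k hMk
    rw [← hρval] at haux
    have hMfacpos : (0:ℝ) < (M.factorial : ℝ) := by positivity
    have hkpow : ρ ^ k = ρ ^ M * ρ ^ (k - M) := by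
      rw [← pow_add]; congr 1; omega
    rw [hΔ]
    have hρMne : ρ ^ M ≠ 0 := by positivity
    calc ((k + t).factorial : ℝ)
        = ((k + t).factorial : ℝ) * (M.factorial : ℝ) / (M.factorial : ℝ) := by field_simp
      _ ≤ ((M + t).factorial : ℝ) * ρ ^ (k - M) * (k.factorial : ℝ) / (M.factorial : ℝ) := by
          gcongr
      _ = (((M + t).factorial : ℝ) / (M.factorial : ℝ)) / ρ ^ M * ρ ^ k * (k.factorial : ℝ) := by
          rw [hkpow]; field_simp
  · rcases le_or_gt ((n : ℤ) - lam) 1 with h1 | h2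
    · -- case b
      obtain ⟨hρ, hΔ⟩ := hcase_b h1
      have hsneg : s ≤ -1 := by omega
      set t := (-s).toNat with htdef
      have htZ : (t : ℤ) = -s := Int.toNat_of_nonneg (by omega)
      have ht1 : 1 ≤ t := by omega
      have htm : t ≤ m - 1 := by omega
      have htM : t ≤ M := by omega
      have htk : t ≤ k := by omega
      have htR : (t : ℝ) = -(s : ℝ) := by exact_mod_cast congrArg Int.cast htZ
      have hargk : (k : ℝ) + ((n : ℝ) - lam - 1) / 2 = ((k - t : ℕ) : ℝ) + 1/2 := by
        rw [harg]
        have : ((k - t : ℕ) : ℝ) = (k : ℝ) - t := by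
          push_cast [Nat.cast_sub htk]; ring
        rw [this, htR]; ring
      rw [hargk]
      have hgam := gammaHalfAux (k - t) (by omega)
      refine le_trans hgam ?_
      have haux := auxB htM hMk
      have hauxR : ((k - t).factorial : ℝ) * (M.factorial : ℝ)
          ≤ ((M - t).factorial : ℝ) * (k.factorial : ℝ) := by exact_mod_cast haux
      have hMfacpos : (0:ℝ) < (M.factorial : ℝ) := by positivity
      rw [hρ, hΔ, one_pow, mul_one]
      rw [div_mul_eq_mul_div, le_div_iff₀ hMfacpos]
      calc ((k - t).factorial : ℝ) * (M.factorial : ℝ)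
          ≤ ((M - t).factorial : ℝ) * (k.factorial : ℝ) := hauxR
        _ = ((M - t).factorial : ℝ) * (k.factorial : ℝ) := rfl
    · -- case c
      obtain ⟨hρ, hΔ⟩ := hcase_c ⟨h2, h31⟩
      have hs0 : s = 0 := by omega
      have hargk : (k : ℝ) + ((n : ℝ) - lam - 1) / 2 = (k : ℝ) + 1/2 := by
        rw [harg, hs0]; push_cast; ring
      rw [hargk, hρ, hΔ, one_pow, one_mul, one_mul]
      exact gammaHalfAux k (by omega)
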